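/- arXiv:2502.04124 — 7 statements merged into one kernel-verified Lean document; each statement's English description precedes it below -/
import Mathlib

section
/- Let G be a finite group and let X(G) be the set of commutators [x,y] for which there exists a Sylow subgroup P of G such that both x and [x,y] lie in P (y arbitrary in G). If N is a normal subgroup of G, then the image of X(G) in G/N equals X(G/N). -/
open Pointwise


/-- `Xset G` is the set of commutators `[x,y] = x⁻¹y⁻¹xy` such that `x` and `[x,y]`
both lie in some Sylow subgroup `P` of `G` (for some prime `p`), `y` arbitrary. -/
def Xset (G : Type*) [Group G] : Set G :=
  {z | ∃ (p : ℕ) (_ : Fact p.Prime) (P : Sylow p G) (x y : G),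
    z = x⁻¹ * y⁻¹ * x * y ∧ x ∈ (P : Subgroup G) ∧ z ∈ (P : Subgroup G)}

theorem image_Xset_eq (G : Type*) [Group G] [Finite G] (N : Subgroup G) [N.Normal] :
    (QuotientGroup.mk' N) '' Xset G = Xset (G ⧸ N) := by
  have hf : Function.Surjective (QuotientGroup.mk' N) := QuotientGroup.mk'_surjective N
  ext zbar
  constructor
  · rintro ⟨z, ⟨p, hp, P, x, y, rfl, hx, hz⟩, rfl⟩
    refine ⟨p, hp, P.mapSurjective hf, QuotientGroup.mk' N x, QuotientGroup.mk' N y,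
      by simp, ?_, ?_⟩
    · rw [Sylow.coe_mapSurjective]
      exact ⟨x, hx, rfl⟩
    · rw [Sylow.coe_mapSurjective]
      exact ⟨x⁻¹ * y⁻¹ * x * y, hz, rfl⟩
  · rintro ⟨p, hp, Q, xb, yb, rfl, hx, hz⟩
    obtain ⟨P, rfl⟩ := Sylow.mapSurjective_surjective hf p Q
    rw [Sylow.coe_mapSurjective] at hx hz
    obtain ⟨a, ha, hax⟩ := hx
    obtain ⟨y₀, hy₀⟩ := hf yb
    -- the conjugate b of a lies in the preimage H = P ⊔ N
    set b := y₀⁻¹ * a * y₀ with hbdef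
    have hbmem : b ∈ (P : Subgroup G) ⊔ N := by
      have : QuotientGroup.mk' N b ∈ Subgroup.map (QuotientGroup.mk' N) P := by
        have : QuotientGroup.mk' N b = xb * (xb⁻¹ * yb⁻¹ * xb * yb) := by
          simp [hbdef, ← hax, ← hy₀]
          group
        rw [this]
        exact Subgroup.mul_mem _ (⟨a, ha, hax⟩) hz
      rw [← QuotientGroup.ker_mk' N, ← Subgroup.comap_map_eq]
      exact Subgroup.mem_comap.mpr this
    set H : Subgroup G := (P : Subgroup G) ⊔ N with hH
    have hPH : (P : Subgroup G) ≤ H := le_sup_left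
    let P' : Sylow p H := P.subtype hPH
    -- b is a p-element of H
    have hbp : IsPGroup p (Subgroup.zpowers (⟨b, hbmem⟩ : H)) := by
      obtain ⟨k, hk⟩ := P.2 ⟨a, ha⟩
      have hak : a ^ p ^ k = 1 := by
        simpa [Subtype.ext_iff] using hk
      have hbk : (⟨b, hbmem⟩ : H) ^ p ^ k = 1 := by
        have hbG : b ^ p ^ k = 1 := by
          have : (y₀⁻¹ * a * y₀⁻¹⁻¹) ^ p ^ k = y₀⁻¹ * a ^ p ^ k * y₀⁻¹⁻¹ := conj_pow ..
          simp only [inv_inv] at this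
          rw [hbdef, this, hak, mul_one, inv_mul_cancel]
        ext
        simpa using hbG
      intro g
      obtain ⟨m, hm⟩ := g.2
      refine ⟨k, ?_⟩
      have h1 : ((⟨b, hbmem⟩ : H) ^ m) ^ (p ^ k : ℕ) = 1 := by
        rw [← zpow_natCast ((⟨b, hbmem⟩ : H) ^ m), ← zpow_mul, mul_comm, zpow_mul,
          zpow_natCast, hbk, one_zpow]
      ext
      simpa [hm] using congrArg Subtype.val h1
    obtain ⟨S, hS⟩ := hbp.exists_le_sylow
    obtain ⟨g, hgS⟩ := MulAction.exists_smul_eq H S P'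
    have hgb : g * (⟨b, hbmem⟩ : H) * g⁻¹ ∈ (P' : Subgroup H) := by
      rw [← hgS]
      have hb : (⟨b, hbmem⟩ : H) ∈ (S : Subgroup H) := hS (Subgroup.mem_zpowers _)
      rw [Sylow.smul_def]
      exact Subgroup.smul_mem_pointwise_smul _ _ _ hb
    -- translate to G : ↑g * b * ↑g⁻¹ ∈ P
    have hgbG : (g : G) * b * (g : G)⁻¹ ∈ (P : Subgroup G) := by
      rw [Sylow.coe_subtype] at hgb
      simpa [Subgroup.mem_subgroupOf] using hgb
    -- write ↑g = u * n with u ∈ P, n ∈ N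
    have hgH : (g : G) ∈ ((P : Subgroup G) : Set G) * (N : Set G) := by
      rw [← Subgroup.mul_normal]
      exact g.2
    obtain ⟨u, hu, n, hn, hun⟩ := hgH
    have hnbn : n * b * n⁻¹ ∈ (P : Subgroup G) := by
      have := Subgroup.mul_mem _ (Subgroup.mul_mem _ (Subgroup.inv_mem _ hu) hgbG) hu
      have heq : u⁻¹ * ((g : G) * b * (g : G)⁻¹) * u = n * b * n⁻¹ := by
        rw [← hun]; group
      rwa [heq] at this
    refine ⟨a⁻¹ * (y₀ * n⁻¹)⁻¹ * a * (y₀ * n⁻¹),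
      ⟨p, hp, P, a, y₀ * n⁻¹, rfl, ha, ?_⟩, ?_⟩
    · have heq : a⁻¹ * (y₀ * n⁻¹)⁻¹ * a * (y₀ * n⁻¹) = a⁻¹ * (n * b * n⁻¹) := by
        rw [hbdef]; group
      rw [heq]
      exact Subgroup.mul_mem _ (Subgroup.inv_mem _ ha) hnbn
    · have hnq : (n : G ⧸ N) = (1 : G ⧸ N) := (QuotientGroup.eq_one_iff n).mpr hn
      simp [← hax, ← hy₀, hnq, mul_assoc]
end

section
/- Let H be a group generated by a symmetric subset X (i.e., X = X⁻¹) and let K be a subgroup of finite index m in H. Then every right coset Kb contains an element expressible as a product of at most m−1 elements of X. -/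
open Pointwise

section Aux

variable {H : Type*} [Group H]

/-- The set of cosets in `H ⧸ K` reachable by words of length at most `n` in `X`. -/
private def Cset (X : Set H) (K : Subgroup H) (n : ℕ) : Set (H ⧸ K) :=
  {q | ∃ w : List H, w.length ≤ n ∧ (∀ e ∈ w, e ∈ X) ∧ ((w.prod : H) : H ⧸ K) = q}

private lemma Cset_mono (X : Set H) (K : Subgroup H) {n n' : ℕ} (h : n ≤ n') :
    Cset X K n ⊆ Cset X K n' := by
  rintro q ⟨w, hl, hX, hp⟩
  exact ⟨w, hl.trans h, hX, hp⟩

private lemma mem_Cset_of_word (X : Set H) (K : Subgroup H) (w : List H)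
    (hX : ∀ e ∈ w, e ∈ X) : ((w.prod : H) : H ⧸ K) ∈ Cset X K w.length :=
  ⟨w, le_rfl, hX, rfl⟩

private lemma Cset_stable (X : Set H) (K : Subgroup H) {n : ℕ}
    (h : Cset X K n = Cset X K (n + 1)) : ∀ k, Cset X K (n + k) ⊆ Cset X K n := by
  intro k
  induction k with
  | zero => exact le_rfl
  | succ k ih =>
    rintro q ⟨w, hl, hX, hp⟩
    rcases w with _ | ⟨x, w'⟩
    · exact ⟨[], by simp, by simp, hp⟩
    · have hw' : ((w'.prod : H) : H ⧸ K) ∈ Cset X K n := by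
        apply ih
        refine ⟨w', ?_, fun e he => hX e (by simp [he]), rfl⟩
        simp only [List.length_cons] at hl
        omega
      obtain ⟨v, hvl, hvX, hvp⟩ := hw'
      have : q ∈ Cset X K (n + 1) := by
        refine ⟨x :: v, ?_, ?_, ?_⟩
        · simp only [List.length_cons]; omega
        · intro e he
          rcases List.mem_cons.mp he with rfl | he
          · exact hX e (by simp)
          · exact hvX e he
        · rw [← hp]
          simp only [List.prod_cons]
          rw [QuotientGroup.eq] at hvp ⊢
          rwa [mul_inv_rev, mul_assoc, inv_mul_cancel_left] 
      rwa [← h] at this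

private lemma Cset_eq_univ (X : Set H) (hsym : X⁻¹ = X) (hgen : Subgroup.closure X = ⊤)
    (K : Subgroup H) {n : ℕ} (h : Cset X K n = Cset X K (n + 1)) :
    Cset X K n = Set.univ := by
  apply Set.eq_univ_of_forall
  intro q
  obtain ⟨g, rfl⟩ := QuotientGroup.mk_surjective q
  have hg : g ∈ Submonoid.closure X := by
    have h1 : g ∈ (Subgroup.closure X).toSubmonoid := by
      rw [hgen]; trivial
    rwa [Subgroup.closure_toSubmonoid, hsym, Set.union_self] at h1
  obtain ⟨w, hwX, hwp⟩ := Submonoid.exists_list_of_mem_closure hg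
  have h1 : ((w.prod : H) : H ⧸ K) ∈ Cset X K w.length := mem_Cset_of_word X K w hwX
  have h2 : Cset X K w.length ⊆ Cset X K (n + w.length) :=
    Cset_mono X K (Nat.le_add_left _ _)
  have h3 := Cset_stable X K h w.length (h2 h1)
  rwa [hwp] at h3

private lemma Cset_grow (X : Set H) (hsym : X⁻¹ = X) (hgen : Subgroup.closure X = ⊤)
    (K : Subgroup H) [Finite (H ⧸ K)] :
    ∀ n, Cset X K n = Set.univ ∨ n + 1 ≤ (Cset X K n).ncard := by
  intro n
  induction n with
  | zero =>
    right
    have hne : (Cset X K 0).Nonempty := ⟨((1 : H) : H ⧸ K), ⟨[], by simp, by simp, by simp⟩⟩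
    have : 0 < (Cset X K 0).ncard := by
      rw [Set.ncard_pos (Set.toFinite _)]
      exact hne
    omega
  | succ n ih =>
    rcases ih with h | h
    · left
      apply Set.eq_univ_of_univ_subset
      rw [← h]
      exact Cset_mono X K (Nat.le_succ n)
    · by_cases heq : Cset X K n = Cset X K (n + 1)
      · left
        have := Cset_eq_univ X hsym hgen K heq
        rw [← heq]; exact this
      · right
        have hss : Cset X K n ⊂ Cset X K (n + 1) :=
          ⟨Cset_mono X K (Nat.le_succ n), fun hle =>
            heq (le_antisymm (Cset_mono X K (Nat.le_succ n)) hle)⟩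
        have := Set.ncard_lt_ncard hss (Set.toFinite _)
        omega

end Aux

/-- If `H` is generated by a symmetric set `X` and `K` has finite index `m` in `H`,
then every right coset `K*b` contains an element which is a product of at most
`m - 1` elements of `X`. -/
theorem coset_contains_short_word (H : Type*) [Group H] (X : Set H)
    (hsym : X⁻¹ = X) (hgen : Subgroup.closure X = ⊤)
    (K : Subgroup H) (m : ℕ) (hm : 0 < m) (hidx : K.index = m) (b : H) :
    ∃ w : List H, w.length ≤ m - 1 ∧ (∀ e ∈ w, e ∈ X) ∧
      w.prod ∈ (K : Set H) * ({b} : Set H) := by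
  have hcard : Nat.card (H ⧸ K) = m := hidx
  have hfin : Finite (H ⧸ K) := Nat.finite_of_card_ne_zero (by omega)
  -- the ball of radius m-1 covers the quotient
  have hcover : Cset X K (m - 1) = Set.univ := by
    rcases Cset_grow X hsym hgen K (m - 1) with h | h
    · exact h
    · have hsub : Cset X K (m - 1) ⊆ Set.univ := Set.subset_univ _
      have huniv : (Set.univ : Set (H ⧸ K)).ncard = m := by
        rw [Set.ncard_univ, hcard]
      apply Set.eq_of_subset_of_ncard_le hsub _ (Set.toFinite _)
      rw [huniv]
      omega
  -- extract a word for the coset of b⁻¹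
  have hb : ((b⁻¹ : H) : H ⧸ K) ∈ Cset X K (m - 1) := by
    rw [hcover]; trivial
  obtain ⟨w, hl, hX, hp⟩ := hb
  refine ⟨(w.map (·⁻¹)).reverse, by simpa using hl, ?_, ?_⟩
  · intro e he
    simp only [List.mem_reverse, List.mem_map] at he
    obtain ⟨x, hx, rfl⟩ := he
    rw [← hsym]
    simpa using hX x hx
  · have hprod : ((w.map (·⁻¹)).reverse).prod = w.prod⁻¹ := (List.prod_inv_reverse w).symm
    rw [hprod]
    have hK : w.prod⁻¹ * b⁻¹ ∈ K := (QuotientGroup.eq).mp hp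
    exact ⟨w.prod⁻¹ * b⁻¹, hK, b, rfl, by group⟩
end

section
/- Let m be a positive integer and G a finite group such that |x^G| ≤ m for every x ∈ X(G), where X(G) is the set of commutators [x,y] lying together with x in some Sylow subgroup of G. If P is a Sylow p-subgroup of G for a prime p > m, then [G', P] = 1, i.e., P centralizes the derived subgroup of G. -/
/-!
First, `G'` lies in the normal closure `N` of `X(G)`. For a Sylow `q`-subgroup `Q`, `x ∈ Q` and
`u ∈ N_G(Q)`, the commutator `x⁻¹u⁻¹xu` lies in `X(G)`, so the images of `x` and `u` commute in
`G/N`. By a Frattini argument inside the preimage of the image of `Q`, every element normalizing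
that image is the image of an element of `N_G(Q)` times an element of `Q`; so the image of `Q` in
`G/N` has its normalizer inside its centralizer, and Burnside's transfer theorem shows that no prime
divides the order of a commutator of `G/N`, i.e. `G/N` is abelian.

Second, every conjugate of an element of `X(G)` has a centralizer of index `≤ m < p`, and a
`p`-group lies in every subgroup of index `< p`; so `P` centralizes `N`.
-/

open Subgroup

section ClassSize

variable {G : Type*} [Group G]

theorem Subgroup.index_centralizer_singleton (z : G) :
    (centralizer {z}).index = Nat.card {h : G // IsConj z h} := by
  have h := MulAction.index_stabilizer (ConjAct G) z
  rw [ConjAct.stabilizer_eq_centralizer, ← Nat.card_coe_set_eq] at h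
  refine h.trans (Nat.card_congr <| Equiv.subtypeEquivRight fun h => ?_)
  rw [ConjAct.mem_orbit_conjAct, isConj_comm]

theorem card_isConj_congr {z w : G} (h : IsConj z w) :
    Nat.card {x : G // IsConj z x} = Nat.card {x : G // IsConj w x} :=
  Nat.card_congr (Equiv.subtypeEquivRight fun _ => ⟨h.symm.trans, h.trans⟩)

theorem IsPGroup.le_of_index_lt {q : ℕ} [Fact q.Prime] {Q H : Subgroup G} (hQ : IsPGroup q Q)
    [H.FiniteIndex] (hH : H.index < q) : Q ≤ H := by
  obtain ⟨n, hn⟩ := hQ.index (H.subgroupOf Q)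
  have hle : H.relIndex Q ≤ H.index := by
    rw [← relIndex_top_right]
    exact relIndex_le_of_le_right le_top (relIndex_top_right H ▸ FiniteIndex.index_ne_zero)
  have hn0 : n = 0 := by
    rw [relIndex, hn] at hle
    exact Nat.lt_one_iff.mp <| (Nat.pow_lt_pow_iff_right (Fact.out : q.Prime).one_lt).mp <|
      by simpa using hle.trans_lt hH
  rw [← relIndex_eq_one, relIndex, hn, hn0, pow_zero]

theorem normalClosure_le_centralizer_of_card_isConj_lt [Finite G] {q : ℕ} [Fact q.Prime]
    {Q : Subgroup G} (hQ : IsPGroup q Q) {s : Set G}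
    (hs : ∀ z ∈ s, Nat.card {h : G // IsConj z h} < q) :
    normalClosure s ≤ centralizer Q := by
  refine (closure_le _).mpr fun w hw => ?_
  obtain ⟨z, hz, hzw⟩ := Group.mem_conjugatesOfSet_iff.mp hw
  have hQw : Q ≤ centralizer {w} := hQ.le_of_index_lt <| by
    rw [index_centralizer_singleton, ← card_isConj_congr hzw]
    exact hs z hz
  exact fun h hh => mem_centralizer_singleton_iff.mp (hQw hh)

end ClassSize

open scoped IsMulCommutative in
theorem isMulCommutative_of_normalizer_le_centralizer {H : Type*} [Group H] [Finite H]
    (h : ∀ (q : ℕ) [Fact q.Prime],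
      ∃ Q : Sylow q H, normalizer (Q : Subgroup H) ≤ centralizer (Q : Set H)) :
    IsMulCommutative H := by
  have hbot : ∀ g ∈ commutator H, g = 1 := by
    intro g hg
    by_contra hg1
    have : Fact (orderOf g).minFac.Prime := ⟨Nat.minFac_prime (by rwa [Ne, orderOf_eq_one_iff])⟩
    obtain ⟨Q, hQ⟩ := h (orderOf g).minFac
    have : IsMulCommutative Q := ⟨⟨fun a b => Subtype.ext (hQ (le_normalizer b.2) a a.2)⟩⟩
    have hker := Abelianization.commutator_subset_ker (MonoidHom.transferSylow Q hQ) hg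
    exact MonoidHom.not_dvd_card_ker_transferSylow Q hQ
      ((Nat.minFac_dvd _).trans (Subgroup.orderOf_dvd_natCard _ hker))
  exact ⟨⟨fun a b => commutatorElement_eq_one_iff_mul_comm.mp
    (hbot _ (commutator_mem_commutator (mem_top a) (mem_top b)))⟩⟩

theorem Sylow.exists_mem_smul_eq_of_le {G : Type*} [Group G] [Finite G] {p : ℕ} [Fact p.Prime]
    {M : Subgroup G} {P Q : Sylow p G} (hP : (P : Subgroup G) ≤ M) (hQ : (Q : Subgroup G) ≤ M) :
    ∃ c ∈ M, c • P = Q := by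
  obtain ⟨c, hc⟩ := MulAction.exists_smul_eq M (P.subtype hP) (Q.subtype hQ)
  rw [Sylow.smul_subtype] at hc
  exact ⟨c, c.2, Sylow.subtype_injective hc⟩

section Xset

variable {G : Type*} [Group G] {N : Subgroup G} [N.Normal] {q : ℕ} [Fact q.Prime]

theorem commute_mk_of_mem_normalizer (hXN : Xset G ⊆ N) (Q : Sylow q G) {x u : G}
    (hx : x ∈ Q) (hu : u ∈ normalizer (Q : Subgroup G)) : Commute (x : G ⧸ N) u := by
  have hxu : x⁻¹ * u⁻¹ * x * u ∈ (Q : Subgroup G) := by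
    rw [mul_assoc, mul_assoc]
    exact mul_mem (inv_mem hx) (by simpa [mul_assoc] using (mem_normalizer_iff''.mp hu x).mp hx)
  have hN : x⁻¹ * u⁻¹ * x * u ∈ N := hXN ⟨q, inferInstance, Q, x, u, rfl, hx, hxu⟩
  rw [← mul_inv_rev, mul_assoc, ← QuotientGroup.eq] at hN
  exact hN.symm

theorem normalizer_map_sylow_le_centralizer [Finite G] (hXN : Xset G ⊆ N) (Q : Sylow q G) :
    normalizer (map (QuotientGroup.mk' N) Q) ≤
      centralizer (map (QuotientGroup.mk' N) (Q : Subgroup G) : Set (G ⧸ N)) := by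
  set M := comap (QuotientGroup.mk' N) (map (QuotientGroup.mk' N) Q)
  rintro η hη _ ⟨x, hx, rfl⟩
  obtain ⟨y, rfl⟩ := QuotientGroup.mk_surjective η
  have hyQ : ((y • Q : Sylow q G) : Subgroup G) ≤ M := by
    rintro _ ⟨x', hx', rfl⟩
    exact (mem_normalizer_iff.mp hη _).mp ⟨x', hx', rfl⟩
  obtain ⟨c, hc, hcy⟩ := Sylow.exists_mem_smul_eq_of_le hyQ (le_comap_map _ _)
  rw [smul_smul, Sylow.smul_eq_iff_mem_normalizer] at hcy
  obtain ⟨a, ha, hac⟩ := hc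
  have hy : (y : G ⧸ N) = (a : G ⧸ N)⁻¹ * ↑(c * y) := by
    rw [QuotientGroup.mk_mul, show (a : G ⧸ N) = c from hac, inv_mul_cancel_left]
  show Commute (x : G ⧸ N) y
  rw [hy]
  exact (commute_mk_of_mem_normalizer hXN Q hx (le_normalizer ha)).inv_right.mul_right
    (commute_mk_of_mem_normalizer hXN Q hx hcy)

theorem commutator_le_of_xset_subset [Finite G] (hXN : Xset G ⊆ N) : commutator G ≤ N := by
  rw [← Subgroup.Normal.quotient_commutative_iff_commutator_le]
  refine isMulCommutative_of_normalizer_le_centralizer fun q _ => ?_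
  obtain ⟨Q⟩ := Sylow.nonempty (p := q) (G := G)
  exact ⟨Q.mapSurjective (QuotientGroup.mk'_surjective N), normalizer_map_sylow_le_centralizer hXN Q⟩

end Xset

theorem sylow_centralizes_derived_general (G : Type*) [Group G] [Finite G] (m : ℕ)
    (hX : ∀ x ∈ Xset G, Nat.card {h : G // IsConj x h} ≤ m)
    (p : ℕ) [Fact p.Prime] (hp : m < p) (P : Sylow p G) :
    ⁅commutator G, (P : Subgroup G)⁆ = ⊥ := by
  rw [commutator_eq_bot_iff_le_centralizer]
  calc commutator G ≤ normalClosure (Xset G) := commutator_le_of_xset_subset subset_normalClosure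
    _ ≤ centralizer P :=
      normalClosure_le_centralizer_of_card_isConj_lt P.isPGroup' fun z hz => (hX z hz).trans_lt hp

/-- If every element of `Xset G` has conjugacy class of size at most `m` and `p > m`
is a prime, then any Sylow `p`-subgroup of `G` centralizes `G'`. -/
theorem sylow_centralizes_derived (G : Type*) [Group G] [Finite G] (m : ℕ) (hm : 0 < m)
    (hX : ∀ x ∈ Xset G, Nat.card {h : G // IsConj x h} ≤ m)
    (p : ℕ) [Fact p.Prime] (hp : m < p) (P : Sylow p G) :
    ⁅commutator G, (P : Subgroup G)⁆ = ⊥ :=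
  sylow_centralizes_derived_general G m hX p hp P
end

section
/- Let m be a positive integer and G a finite group in which every element of prime power order lies in a conjugacy class of size at most m. Then the derived subgroup G' is of order bounded by a function of m only. -/
/-!
An element `u` of order `p ^ k` with `p > m` is central: for `g` of prime power order,
`⟨u⟩ ∩ C(g)` has `p`-power index at most `|G : C(g)| ≤ m < p` in `⟨u⟩`, so `u ∈ C(g)`; and if
`|x| = ab` with `a, b` coprime, whatever commutes with `x ^ a` and `x ^ b` commutes with `x`.
The same decomposition gives `C(x ^ a) ⊓ C(x ^ b) ≤ C(x)`, so `|G : C(x)|` is at most `m` to the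
number of primes `p ≤ m` dividing `|x|`. Finally, if all centralizers have index at most `n`, then
`⁅a, b⁆ = ⁅a * e, b * d⁆` for all `d ∈ C(a)`, `e ∈ C(b * d)`, so every commutator is attained by at
least `|G|² / n²` pairs and there are at most `n²` commutators; Schur's bound on `|G'|` in terms of
the number of commutators finishes the proof.
-/

open scoped commutatorElement

section
open Subgroup Finset

variable {G : Type*} [Group G]

theorem card_isConj_eq_index_centralizer (x : G) :
    Nat.card {h : G // IsConj x h} = (centralizer {x}).index := by
  have horbit : {h : G | IsConj x h} = MulAction.orbit (ConjAct G) x := by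
    ext h
    rw [Set.mem_ofPred_eq, ConjAct.mem_orbit_conjAct, isConj_comm]
  rw [centralizer_eq_comap_stabilizer]
  refine .trans ?_ (index_comap_of_surjective _ ConjAct.toConjAct.surjective).symm
  rw [MulAction.index_stabilizer, ← horbit, ← Nat.card_coe_set_eq]
  rfl

theorem Commute.of_pow_of_pow_of_coprime {a b : ℕ} (hab : a.Coprime b) {g x : G}
    (ha : Commute g (x ^ a)) (hb : Commute g (x ^ b)) : Commute g x := by
  have hx : x = (x ^ a) ^ a.gcdA b * (x ^ b) ^ a.gcdB b := by
    rw [← zpow_natCast, ← zpow_natCast, ← zpow_mul, ← zpow_mul, ← zpow_add,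
      ← Nat.gcd_eq_gcd_ab, hab, Nat.cast_one, zpow_one]
  rw [hx]
  exact (ha.zpow_right _).mul_right (hb.zpow_right _)

theorem commutatorElement_mul_left_of_commute {x y e : G} (h : Commute e y) :
    ⁅x * e, y⁆ = ⁅x, y⁆ := by
  simp only [commutatorElement_def, mul_inv_rev, mul_assoc, h.eq, mul_inv_cancel_left]

theorem commutatorElement_mul_right_of_commute {x y d : G} (h : Commute d x) :
    ⁅x, y * d⁆ = ⁅x, y⁆ := by
  simp only [commutatorElement_def, mul_inv_rev, mul_assoc, h.inv_right.eq, mul_inv_cancel_left]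

theorem Finite.induction_on_isPrimePow_orderOf [Finite G] {P : G → Prop} (one : P 1)
    (prime_pow : ∀ x, IsPrimePow (orderOf x) → P x)
    (coprime : ∀ x a b, a.Coprime b → orderOf x = a * b → orderOf (x ^ a) = b →
      orderOf (x ^ b) = a → P (x ^ a) → P (x ^ b) → P x)
    (x : G) : P x := by
  suffices ∀ n (x : G), orderOf x = n → P x from this _ x rfl
  intro n
  induction n using Nat.recOnPosPrimePosCoprime with
  | prime_pow p k hp hk => exact fun x hx => prime_pow x (hx ▸ ⟨p, k, hp.prime, hk, rfl⟩)
  | zero => exact fun x hx => absurd hx (orderOf_pos x).ne'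
  | one => exact fun x hx => orderOf_eq_one_iff.1 hx ▸ one
  | coprime a b ha hb hab iha ihb =>
    intro x hx
    have hxa : orderOf (x ^ a) = b := by
      rw [orderOf_pow_of_dvd (by omega) (hx ▸ dvd_mul_right a b), hx,
        Nat.mul_div_cancel_left _ (by omega)]
    have hxb : orderOf (x ^ b) = a := by
      rw [orderOf_pow_of_dvd (by omega) (hx ▸ dvd_mul_left b a), hx,
        Nat.mul_div_cancel _ (by omega)]
    exact coprime x a b hab hx hxa hxb (ihb _ hxa) (iha _ hxb)

theorem commute_of_orderOf_eq_prime_pow_of_index_lt [Finite G] {p k : ℕ} (hp : p.Prime)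
    {u g : G} (hu : orderOf u = p ^ k) (hg : (centralizer {g}).index < p) : Commute u g := by
  set C := centralizer {g}
  have hdvd : C.relIndex (zpowers u) ∣ p ^ k :=
    hu ▸ Nat.card_zpowers u ▸ C.relIndex_dvd_card _
  have hle : C.relIndex (zpowers u) ≤ C.index := by
    rw [← C.relIndex_top_right]
    exact C.relIndex_le_of_le_right le_top (C.relIndex_top_right ▸ C.index_ne_zero_of_finite)
  obtain ⟨j, -, hj⟩ := (Nat.dvd_prime_pow hp).1 hdvd
  have hj0 : j = 0 := by
    by_contra h
    have := Nat.le_self_pow h p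
    omega
  have hsub : zpowers u ≤ C := relIndex_eq_one.1 (by rw [hj, hj0, pow_zero])
  exact mem_centralizer_singleton_iff.1 (hsub (mem_zpowers u))

theorem commute_of_orderOf_eq_prime_pow_of_lt [Finite G] {m : ℕ}
    (hyp : ∀ x : G, IsPrimePow (orderOf x) → (centralizer {x}).index ≤ m)
    {p k : ℕ} (hp : p.Prime) (hmp : m < p) {u : G} (hu : orderOf u = p ^ k) (g : G) :
    Commute u g := by
  induction g using Finite.induction_on_isPrimePow_orderOf with
  | one => exact Commute.one_right u
  | prime_pow g hg =>
    exact commute_of_orderOf_eq_prime_pow_of_index_lt hp hu ((hyp g hg).trans_lt hmp)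
  | coprime g a b hab _ _ _ ha hb => exact ha.of_pow_of_pow_of_coprime hab hb

theorem index_centralizer_le_pow [Finite G] {m : ℕ}
    (hyp : ∀ x : G, IsPrimePow (orderOf x) → (centralizer {x}).index ≤ m) (x : G) :
    (centralizer {x}).index ≤ m ^ #((orderOf x).primeFactors ∩ range (m + 1)) := by
  induction x using Finite.induction_on_isPrimePow_orderOf with
  | one => simp [centralizer_eq_top_iff_subset.2 (Set.singleton_subset_iff.2 (one_mem (center G)))]
  | prime_pow x hx =>
    obtain ⟨p, k, hp, hk, hpk⟩ := hx
    rw [← hpk, Nat.primeFactors_prime_pow hk.ne' hp.nat_prime]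
    by_cases hpm : p ≤ m
    · rw [singleton_inter_of_mem (mem_range_succ_iff.2 hpm), card_singleton, pow_one]
      exact hyp x ⟨p, k, hp, hk, hpk⟩
    · have hcentral : centralizer {x} = ⊤ := centralizer_eq_top_iff_subset.2 <|
        Set.singleton_subset_iff.2 <| mem_center_iff.2 fun g =>
          (commute_of_orderOf_eq_prime_pow_of_lt hyp hp.nat_prime (not_le.1 hpm) hpk.symm g).symm.eq
      rw [hcentral, index_top, singleton_inter_of_notMem (by simpa using hpm), card_empty, pow_zero]
  | coprime x a b hab hx hxa hxb iha ihb =>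
    have hsub : centralizer {x ^ a} ⊓ centralizer {x ^ b} ≤ centralizer {x} := fun g hg =>
      mem_centralizer_singleton_iff.2 <| Commute.of_pow_of_pow_of_coprime hab
        (mem_centralizer_singleton_iff.1 (mem_inf.1 hg).1)
        (mem_centralizer_singleton_iff.1 (mem_inf.1 hg).2)
    rw [hxa] at iha
    rw [hxb] at ihb
    obtain ⟨ha0, hb0⟩ := mul_ne_zero_iff.1 (hx ▸ (orderOf_pos x).ne')
    calc (centralizer {x}).index
        ≤ (centralizer {x ^ a} ⊓ centralizer {x ^ b}).index := index_antitone hsub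
      _ ≤ (centralizer {x ^ a}).index * (centralizer {x ^ b}).index := index_inf_le
      _ ≤ m ^ #(b.primeFactors ∩ range (m + 1)) * m ^ #(a.primeFactors ∩ range (m + 1)) :=
        Nat.mul_le_mul iha ihb
      _ = m ^ #((orderOf x).primeFactors ∩ range (m + 1)) := by
        rw [← pow_add, hx, Nat.primeFactors_mul ha0 hb0, union_inter_distrib_right,
          card_union_of_disjoint <|
            hab.disjoint_primeFactors.mono inter_subset_left inter_subset_left, add_comm]

theorem card_sq_le_mul_card_commutatorElement_fiber [Fintype G] [DecidableEq G] {n : ℕ}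
    (hall : ∀ x : G, (centralizer {x}).index ≤ n) (a b : G) :
    Fintype.card G ^ 2 ≤ n ^ 2 * #{p : G × G | ⁅p.1, p.2⁆ = ⁅a, b⁆} := by
  classical
  have hcard (x : G) : Fintype.card G ≤ n * #{g | g ∈ centralizer {x}} := by
    rw [← Fintype.card_subtype, ← Nat.card_eq_fintype_card, ← Nat.card_eq_fintype_card,
      ← (centralizer {x}).card_mul_index, mul_comm]
    exact Nat.mul_le_mul_right _ (hall x)
  set S := ({d | d ∈ centralizer {a}} : Finset G).sigma
    fun d => ({e | e ∈ centralizer {b * d}} : Finset G)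
  have hS : #S ≤ #{p : G × G | ⁅p.1, p.2⁆ = ⁅a, b⁆} := by
    refine card_le_card_of_injOn (fun de => (a * de.2, b * de.1)) ?_ ?_
    · rintro ⟨d, e⟩ hde
      obtain ⟨hd, he⟩ : d ∈ centralizer {a} ∧ e ∈ centralizer {b * d} := by simpa [S] using hde
      simp only [coe_filter_univ, Set.mem_ofPred_eq]
      rw [commutatorElement_mul_left_of_commute (mem_centralizer_singleton_iff.1 he),
        commutatorElement_mul_right_of_commute (mem_centralizer_singleton_iff.1 hd)]
    · rintro ⟨d, e⟩ - ⟨d', e'⟩ - h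
      simp only [Prod.mk.injEq, mul_right_inj] at h
      obtain ⟨rfl, rfl⟩ := h
      rfl
  calc Fintype.card G ^ 2 = Fintype.card G * Fintype.card G := sq _
    _ ≤ n * #{d | d ∈ centralizer {a}} * Fintype.card G := Nat.mul_le_mul_right _ (hcard a)
    _ = n * ∑ d ∈ {d | d ∈ centralizer {a}}, Fintype.card G := by
      rw [sum_const, smul_eq_mul, mul_assoc]
    _ ≤ n * ∑ d ∈ {d | d ∈ centralizer {a}}, n * #{e | e ∈ centralizer {b * d}} := by
      gcongr with d
      exact hcard _
    _ = n ^ 2 * #S := by rw [card_sigma, ← mul_sum, ← mul_assoc, sq]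
    _ ≤ _ := Nat.mul_le_mul_left _ hS

theorem card_commutatorSet_le [Finite G] {n : ℕ} (hall : ∀ x : G, (centralizer {x}).index ≤ n) :
    Nat.card (commutatorSet G) ≤ n ^ 2 := by
  classical
  cases nonempty_fintype G
  set f : G × G → G := fun p => ⁅p.1, p.2⁆
  have hset : commutatorSet G = ↑((univ : Finset (G × G)).image f) := by
    ext
    simp [commutatorSet, f]
  have hpos : 0 < Fintype.card G ^ 2 := by positivity
  refine Nat.le_of_mul_le_mul_right ?_ hpos
  calc Nat.card (commutatorSet G) * Fintype.card G ^ 2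
      = ∑ c ∈ univ.image f, Fintype.card G ^ 2 := by
        rw [hset, Nat.card_coe_set_eq, Set.ncard_coe_finset, sum_const, smul_eq_mul]
    _ ≤ ∑ c ∈ univ.image f, n ^ 2 * #{p | f p = c} := sum_le_sum fun c hc => by
        obtain ⟨⟨a, b⟩, -, rfl⟩ := mem_image.1 hc
        exact card_sq_le_mul_card_commutatorElement_fiber hall a b
    _ = n ^ 2 * Fintype.card G ^ 2 := by
        rw [← mul_sum, ← card_eq_sum_card_image, card_univ, Fintype.card_prod, ← sq]

end

/-- If `G` is a finite group in which every element of prime power order has conjugacy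
class of size at most `m`, then `G'` has `m`-bounded order. -/
theorem derived_bounded_of_primePower_classes :
    ∃ f : ℕ → ℕ, ∀ (G : Type) (_ : Group G) (_ : Finite G) (m : ℕ), 0 < m →
      (∀ x : G, IsPrimePow (orderOf x) → Nat.card {h : G // IsConj x h} ≤ m) →
      Nat.card (commutator G) ≤ f m := by
  -- Taking the maximum spares us proving that `cardCommutatorBound` is monotone.
  refine ⟨fun m => (Finset.range ((m ^ (m + 1)) ^ 2 + 1)).sup Subgroup.cardCommutatorBound, ?_⟩
  intro G _ _ m hm hclass
  have hyp (x : G) (hx : IsPrimePow (orderOf x)) : (Subgroup.centralizer {x}).index ≤ m :=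
    card_isConj_eq_index_centralizer x ▸ hclass x hx
  have hall (x : G) : (Subgroup.centralizer {x}).index ≤ m ^ (m + 1) :=
    (index_centralizer_le_pow hyp x).trans <| Nat.pow_le_pow_right hm <|
      (Finset.card_le_card Finset.inter_subset_right).trans (Finset.card_range _).le
  calc Nat.card (commutator G)
      ≤ Subgroup.cardCommutatorBound (Nat.card (commutatorSet G)) :=
        Subgroup.card_commutator_le_of_finite_commutatorSet G
    _ ≤ _ := Finset.le_sup (Finset.mem_range_succ_iff.2 (card_commutatorSet_le hall))
end

section
/- Let G be a finite group in which every element of prime power order has conjugacy class of size at most m, and let p > m be a prime dividing |G|. Then every Sylow p-subgroup of G is contained in the center of G. -/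
/-- If every element of prime power order of a finite group `G` has conjugacy class of
size at most `m`, and `p > m` is a prime dividing `|G|`, then every Sylow `p`-subgroup
of `G` is central. -/
theorem sylow_le_center_of_primePower_classes (G : Type*) [Group G] [Finite G]
    (m : ℕ) (hm : 0 < m)
    (h : ∀ x : G, IsPrimePow (orderOf x) → Nat.card {h : G // IsConj x h} ≤ m)
    (p : ℕ) [Fact p.Prime] (hp : m < p) (hdvd : p ∣ Nat.card G) (P : Sylow p G) :
    (P : Subgroup G) ≤ Subgroup.center G := by
  intro x hx
  rw [Subgroup.mem_center_iff]
  obtain ⟨k, hk⟩ := P.2 ⟨x, hx⟩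
  have hxk : x ^ p ^ k = 1 := by
    have := congrArg (Subtype.val) hk
    simpa using this
  have hxdvd : orderOf x ∣ p ^ k := orderOf_dvd_of_pow_eq_one hxk
  -- Key: x commutes with every element of prime power order
  have key : ∀ y : G, IsPrimePow (orderOf y) → x * y * x⁻¹ = y := by
    intro y hy
    haveI : Finite {h : G // IsConj y h} := Subtype.finite
    haveI : DecidableEq {h : G // IsConj y h} := Classical.decEq _
    haveI : Fintype {h : G // IsConj y h} := Fintype.ofFinite _
    let φ : G →* Equiv.Perm {h : G // IsConj y h} :=
      { toFun := fun g =>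
          { toFun := fun z => ⟨g * z.1 * g⁻¹, z.2.trans (isConj_iff.2 ⟨g, rfl⟩)⟩
            invFun := fun z => ⟨g⁻¹ * z.1 * g, z.2.trans (isConj_iff.2 ⟨g⁻¹, by group⟩)⟩
            left_inv := fun z => Subtype.ext (by group)
            right_inv := fun z => Subtype.ext (by group) }
        map_one' := Equiv.ext fun z => Subtype.ext (by simp)
        map_mul' := fun a b => Equiv.ext fun z => Subtype.ext (by simp [mul_assoc]) }
    have h1 : orderOf (φ x) ∣ p ^ k := (orderOf_map_dvd φ x).trans hxdvd
    have h2 : φ x = 1 := by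
      by_contra hne
      obtain ⟨j, hj, hje⟩ :=
        (Nat.dvd_prime_pow (Fact.out : p.Prime)).mp h1
      have hj1 : j ≠ 0 := by
        rintro rfl
        exact hne (orderOf_eq_one_iff.mp (by simpa using hje))
      have hpdvd : p ∣ orderOf (φ x) := hje ▸ dvd_pow_self p hj1
      have hcard : orderOf (φ x) ∣ Nat.factorial (Nat.card {h : G // IsConj y h}) := by
        have hc := orderOf_dvd_natCard (φ x)
        rwa [Nat.card_eq_fintype_card, Fintype.card_perm,
          ← Nat.card_eq_fintype_card] at hc
      have : p ∣ Nat.factorial (Nat.card {h : G // IsConj y h}) := hpdvd.trans hcard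
      have hle : p ≤ Nat.card {h : G // IsConj y h} :=
        ((Nat.Prime.dvd_factorial (Fact.out : p.Prime)).mp this)
      exact absurd ((h y hy).trans_lt hp) (not_lt.mpr hle)
    have := congrArg (fun e : Equiv.Perm {h : G // IsConj y h} =>
      (e ⟨y, IsConj.refl y⟩).1) h2
    simpa [φ] using this
  -- Induction on the order: x commutes with everything
  have main : ∀ n : ℕ, ∀ g : G, orderOf g = n → x * g * x⁻¹ = g := by
    intro n
    induction n using Nat.strong_induction_on with
    | _ n IH =>
      intro g hg
      have hn0 : n ≠ 0 := by
        rintro rfl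
        exact absurd hg (orderOf_pos g).ne'
      rcases eq_or_ne n 1 with h1 | h1
      · have : g = 1 := orderOf_eq_one_iff.mp (by rw [hg, h1])
        subst this; simp
      by_cases hpp : IsPrimePow n
      · exact key g (by rwa [hg])
      have hnpos : 0 < n := Nat.pos_of_ne_zero hn0
      set q := n.minFac with hqdef
      have hq : q.Prime := Nat.minFac_prime h1
      have hqd : q ∣ n := Nat.minFac_dvd n
      set a := n.factorization q with hadef
      have ha : 0 < a := Nat.Prime.factorization_pos_of_dvd hq hn0 hqd
      set A := q ^ a with hAdef
      have hAdvd : A ∣ n := Nat.ordProj_dvd n q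
      have hAr : A * (n / A) = n := Nat.mul_div_cancel' hAdvd
      set r := n / A with hrdef
      have hcop : Nat.Coprime A r := Nat.Coprime.pow_left a (Nat.coprime_ordCompl hq hn0)
      have hA1 : 1 < A := Nat.one_lt_pow ha.ne' hq.one_lt
      have hApp : IsPrimePow A := ⟨q, a, hq.prime, ha, rfl⟩
      have hAn : A ≠ n := fun hAA => hpp (hAA ▸ hApp)
      have hAlt : A < n := lt_of_le_of_ne (Nat.le_of_dvd hnpos hAdvd) hAn
      have hr0 : 0 < r := Nat.div_pos (Nat.le_of_dvd hnpos hAdvd) (by omega)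
      have hrlt : r < n := Nat.div_lt_self hnpos hA1
      obtain ⟨u, v, huv⟩ := (Nat.isCoprime_iff_coprime.mpr hcop : IsCoprime (A : ℤ) r)
      set y1 := g ^ (u * (A : ℤ)) with hy1def
      set y2 := g ^ (v * (r : ℤ)) with hy2def
      have hgn : g ^ (n : ℤ) = 1 := by
        rw [zpow_natCast, ← hg, pow_orderOf_eq_one]
      have hg12 : y1 * y2 = g := by
        rw [hy1def, hy2def, ← zpow_add, huv, zpow_one]
      have key1 : y1 ^ r = 1 := by
        have hexp : u * (A : ℤ) * (r : ℤ) = (n : ℤ) * u := by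
          push_cast [← hAr]; ring
        calc y1 ^ r = g ^ (u * (A : ℤ) * (r : ℤ)) := by
              rw [← zpow_natCast y1 r, hy1def, ← zpow_mul]
          _ = (g ^ (n : ℤ)) ^ u := by rw [hexp, zpow_mul]
          _ = 1 := by rw [hgn, one_zpow]
      have key2 : y2 ^ A = 1 := by
        have hexp : v * (r : ℤ) * (A : ℤ) = (n : ℤ) * v := by
          push_cast [← hAr]; ring
        calc y2 ^ A = g ^ (v * (r : ℤ) * (A : ℤ)) := by
              rw [← zpow_natCast y2 A, hy2def, ← zpow_mul]
          _ = (g ^ (n : ℤ)) ^ v := by rw [hexp, zpow_mul]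
          _ = 1 := by rw [hgn, one_zpow]
      have ho1 : orderOf y1 < n :=
        lt_of_le_of_lt (Nat.le_of_dvd hr0 (orderOf_dvd_of_pow_eq_one key1)) hrlt
      have ho2 : orderOf y2 < n :=
        lt_of_le_of_lt (Nat.le_of_dvd (by omega) (orderOf_dvd_of_pow_eq_one key2)) hAlt
      have c1 := IH (orderOf y1) ho1 y1 rfl
      have c2 := IH (orderOf y2) ho2 y2 rfl
      calc x * g * x⁻¹ = (x * y1 * x⁻¹) * (x * y2 * x⁻¹) := by
            rw [← hg12]; group
        _ = g := by rw [c1, c2, hg12]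
  intro g
  have hg := main (orderOf g) g rfl
  exact (mul_inv_eq_iff_eq_mul.mp hg).symm
end

section
/- For every positive integer s there is a finite group G such that |x^G| ≤ 2 for every commutator x of prime power order in G, while the Fitting subgroup of G has index 2^s in G. -/
/-!
Take `G = ∏ᵢ D_{pᵢ}` and let `F` be the product of the rotation subgroups: it is abelian and
normal of index `2^s`. Every commutator lies in `F`. Its nontrivial coordinates have the pairwise
distinct prime orders `pᵢ`, so if its order is a prime power it is trivial in all but one
coordinate, where its only conjugates are `r k` and `r (-k)`.

Conversely, let `H` be a nilpotent normal subgroup containing `h` with a reflection `sr j` in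
coordinate `i`. As `H` is normal, `⁅g, h⁆ ∈ H` for every `g`, so the iterated commutators
`⁅⋯⁅g, h⁆, …, h⁆` run down the lower central series of `H` and vanish eventually. For `g = r 1`
in coordinate `i` they are `r (2^m)` there, which never vanishes since `pᵢ` is odd.
-/

open Function
open scoped commutatorElement IsMulCommutative

lemma MonoidHom.map_iterate_commutatorElement {G K : Type*} [Group G] [Group K] (f : G →* K)
    (g h : G) (n : ℕ) : f ((fun c ↦ ⁅c, h⁆)^[n] g) = (fun c ↦ ⁅c, f h⁆)^[n] (f g) :=
  Semiconj.iterate_right (fun c ↦ map_commutatorElement f c h) n g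

namespace Subgroup

variable {G : Type*} [Group G]

lemma iterate_commutatorElement_mem_lowerCentralSeries {S : Subgroup G} {g h : G}
    (hg : g ∈ S) (hh : h ∈ S) (n : ℕ) : (fun c ↦ ⁅c, h⁆)^[n] g ∈ S.lowerCentralSeries n := by
  induction n with
  | zero => exact hg
  | succ n ih =>
    rw [iterate_succ_apply', lowerCentralSeries_succ]
    exact commutator_mem_commutator ih hh

lemma Normal.exists_iterate_commutatorElement_eq_one {S : Subgroup G} (hS : S.Normal)
    [Group.IsNilpotent S] {h : G} (hh : h ∈ S) (g : G) :
    ∃ n, (fun c ↦ ⁅c, h⁆)^[n] g = 1 := by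
  obtain ⟨n, hn⟩ := (isNilpotent_iff_lowerCentralSeries S).1 ‹_›
  have hgh : ⁅g, h⁆ ∈ S := S.mul_mem (hS.conj_mem h hh g) (S.inv_mem hh)
  refine ⟨n + 1, ?_⟩
  rw [iterate_succ_apply, ← mem_bot, ← hn]
  exact iterate_commutatorElement_mem_lowerCentralSeries hgh hh n

section Pi

variable {ι : Type*} {G : ι → Type*}

instance pi_normal [∀ i, Group (G i)] (s : Set ι) (H : ∀ i, Subgroup (G i))
    [∀ i, (H i).Normal] : (pi s H).Normal where
  conj_mem _ hx g i hi := (inferInstance : (H i).Normal).conj_mem _ (hx i hi) (g i)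

lemma index_pi' [Fintype ι] [∀ i, Group (G i)] (H : ∀ i, Subgroup (G i)) :
    (pi Set.univ H).index = ∏ i, (H i).index := by
  simp_rw [index, ← Nat.card_pi]
  refine Nat.card_congr
    ((Quotient.congrRight fun x y ↦ ?_).trans (Setoid.piQuotientEquiv _).symm)
  rw [QuotientGroup.leftRel_pi]

end Pi

end Subgroup

namespace Pi

variable {ι : Type*} {G : ι → Type*}

lemma exists_forall_ne_eq_one_of_isPrimePow_orderOf [∀ i, Monoid (G i)] {p : ι → ℕ}
    (hp : ∀ i, (p i).Prime) (hinj : Injective p) {x : ∀ i, G i} (hx : ∀ i, x i ^ p i = 1)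
    (hpow : IsPrimePow (orderOf x)) : ∃ i, ∀ j ≠ i, x j = 1 := by
  obtain ⟨i, hi⟩ : ∃ i, x i ≠ 1 := by
    by_contra! h
    rw [show x = 1 from funext h, orderOf_one] at hpow
    exact not_isPrimePow_one hpow
  obtain ⟨q, m, hq, -, hqm⟩ := hpow
  have hsupp : ∀ j, x j ≠ 1 → p j = q := fun j hj ↦ by
    have : Fact (p j).Prime := ⟨hp j⟩
    have hdvd : p j ∣ q ^ m :=
      hqm ▸ orderOf_eq_prime (hx j) hj ▸ orderOf_map_dvd (Pi.evalMonoidHom G j) x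
    exact (Nat.prime_dvd_prime_iff_eq (hp j) hq.nat_prime).1 ((hp j).dvd_of_dvd_pow hdvd)
  exact ⟨i, fun j hji ↦ not_not.1 fun hj ↦ hji (hinj ((hsupp j hj).trans (hsupp i hi).symm))⟩

lemma card_isConj_le_of_forall_ne_eq_one [∀ i, Group (G i)] {x : ∀ i, G i} {i : ι}
    [Finite (G i)] (hx : ∀ j ≠ i, x j = 1) :
    Nat.card {h // IsConj x h} ≤ Nat.card {g // IsConj (x i) g} := by
  refine Nat.card_le_card_of_injective
    (fun h ↦ ⟨h.1 i, (Pi.evalMonoidHom G i).map_isConj h.2⟩) fun h h' hhh' ↦ ?_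
  have hone : ∀ h : {h // IsConj x h}, ∀ j ≠ i, h.1 j = 1 := fun h j hj ↦
    isConj_one_right.1 (hx j hj ▸ (Pi.evalMonoidHom G j).map_isConj h.2)
  ext j
  by_cases hj : j = i
  · subst hj
    exact congrArg Subtype.val hhh'
  · rw [hone h j hj, hone h' j hj]

end Pi

namespace DihedralGroup

variable {n : ℕ}

def rotations (n : ℕ) : Subgroup (DihedralGroup n) := Subgroup.zpowers (r 1)

instance : IsMulCommutative (rotations n) := Subgroup.zpowers_isMulCommutative _

lemma mem_rotations_iff {g : DihedralGroup n} : g ∈ rotations n ↔ ∃ k, r k = g := by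
  refine Subgroup.mem_zpowers_iff.trans ⟨fun ⟨m, hm⟩ ↦ ⟨m, by rw [← hm, r_one_zpow]⟩, ?_⟩
  rintro ⟨k, rfl⟩
  obtain ⟨m, rfl⟩ := ZMod.intCast_surjective k
  exact ⟨m, r_one_zpow m⟩

lemma r_mem_rotations (k : ZMod n) : r k ∈ rotations n := mem_rotations_iff.2 ⟨k, rfl⟩

lemma index_rotations [NeZero n] : (rotations n).index = 2 := by
  have h := (rotations n).index_mul_card
  rw [rotations, Nat.card_zpowers, orderOf_r_one, nat_card] at h
  exact Nat.eq_of_mul_eq_mul_right (Nat.pos_of_neZero n) h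

lemma pow_eq_one_of_mem_rotations {g : DihedralGroup n} (hg : g ∈ rotations n) : g ^ n = 1 := by
  obtain ⟨k, rfl⟩ := mem_rotations_iff.1 hg
  rw [r_pow, ZMod.natCast_self, mul_zero, r_zero]

lemma inv_mul_inv_mul_mul_mem_rotations (a b : DihedralGroup n) :
    a⁻¹ * b⁻¹ * a * b ∈ rotations n := by
  rcases a with i | i <;> rcases b with j | j <;>
    simp only [inv_r, inv_sr, r_mul_r, r_mul_sr, sr_mul_r, sr_mul_sr, r_mem_rotations]

lemma conj_r_eq_or (c : DihedralGroup n) (k : ZMod n) :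
    c * r k * c⁻¹ = r k ∨ c * r k * c⁻¹ = r (-k) := by
  rcases c with i | i
  · left
    simp only [inv_r, r_mul_r]
    ring_nf
  · right
    simp only [inv_sr, sr_mul_r, sr_mul_sr]
    ring_nf

instance : (rotations n).Normal where
  conj_mem g hg c := by
    obtain ⟨k, rfl⟩ := mem_rotations_iff.1 hg
    rcases conj_r_eq_or c k with h | h <;> rw [h] <;> exact r_mem_rotations _

lemma card_isConj_r_le_two (k : ZMod n) : Nat.card {h // IsConj (r k) h} ≤ 2 := by
  have hsub : {h | IsConj (r k) h} ⊆ {r k, r (-k)} := fun h hh ↦ by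
    obtain ⟨c, rfl⟩ := isConj_iff.1 hh
    exact conj_r_eq_or c k
  calc Nat.card {h // IsConj (r k) h}
      ≤ Nat.card ({r k, r (-k)} : Set (DihedralGroup n)) :=
        Nat.card_mono (Set.toFinite _) hsub
    _ ≤ 2 := by
        rw [Nat.card_coe_set_eq]
        exact (Set.ncard_insert_le _ _).trans (by simp)

lemma iterate_commutatorElement_sr (j k : ZMod n) (m : ℕ) :
    (fun c ↦ ⁅c, sr j⁆)^[m] (r k) = r (2 ^ m * k) := by
  induction m with
  | zero => simp
  | succ m ih =>
    rw [iterate_succ_apply', ih, commutatorElement_def]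
    simp only [inv_r, inv_sr, r_mul_sr, sr_mul_r, sr_mul_sr]
    ring_nf

lemma iterate_commutatorElement_sr_ne_one (hodd : Odd n) (hne : n ≠ 1) (j : ZMod n) (m : ℕ) :
    (fun c ↦ ⁅c, sr j⁆)^[m] (r 1) ≠ 1 := by
  have : Nontrivial (ZMod n) := ZMod.nontrivial_iff.2 hne
  have h2 : IsUnit (2 : ZMod n) := by
    exact_mod_cast (ZMod.isUnit_iff_coprime 2 n).2 (Nat.coprime_two_left.2 hodd)
  rw [iterate_commutatorElement_sr, mul_one, one_def, Ne, r.injEq]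
  exact (h2.pow m).ne_zero

end DihedralGroup

open DihedralGroup

section DihedralProduct

variable {ι : Type*} {n : ι → ℕ}

instance : IsMulCommutative (Subgroup.pi Set.univ fun i ↦ rotations (n i)) :=
  .of_setLike_mul_comm fun _ ha _ hb ↦ funext fun i ↦
    setLike_mul_comm (s := rotations (n i)) (ha i trivial) (hb i trivial)

lemma le_pi_rotations_of_isNilpotent (hodd : ∀ i, Odd (n i)) (hne : ∀ i, n i ≠ 1)
    {H : Subgroup (∀ i, DihedralGroup (n i))} (hH : H.Normal) [Group.IsNilpotent H] :
    H ≤ Subgroup.pi Set.univ fun i ↦ rotations (n i) := by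
  classical
  rintro h hh i -
  rcases hi : h i with k | j
  · exact r_mem_rotations k
  exfalso
  obtain ⟨m, hm⟩ := hH.exists_iterate_commutatorElement_eq_one hh (Pi.mulSingle i (r 1))
  apply iterate_commutatorElement_sr_ne_one (hodd i) (hne i) j m
  simpa [MonoidHom.map_iterate_commutatorElement, hi] using congrArg (Pi.evalMonoidHom _ i) hm

lemma isGreatest_pi_rotations (hodd : ∀ i, Odd (n i)) (hne : ∀ i, n i ≠ 1) :
    IsGreatest {H : Subgroup (∀ i, DihedralGroup (n i)) | H.Normal ∧ Group.IsNilpotent H}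
      (Subgroup.pi Set.univ fun i ↦ rotations (n i)) :=
  ⟨⟨inferInstance, inferInstance⟩, fun _ ⟨hH, _⟩ ↦ le_pi_rotations_of_isNilpotent hodd hne hH⟩

lemma index_pi_rotations [Fintype ι] [∀ i, NeZero (n i)] :
    (Subgroup.pi Set.univ fun i ↦ rotations (n i)).index = 2 ^ Fintype.card ι := by
  simp [Subgroup.index_pi', index_rotations]

lemma card_isConj_le_two_of_isPrimePow_orderOf [∀ i, NeZero (n i)] (hp : ∀ i, (n i).Prime)
    (hinj : Injective n) {x : ∀ i, DihedralGroup (n i)}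
    (hx : x ∈ Subgroup.pi Set.univ fun i ↦ rotations (n i)) (hpow : IsPrimePow (orderOf x)) :
    Nat.card {h // IsConj x h} ≤ 2 := by
  obtain ⟨i, hi⟩ := Pi.exists_forall_ne_eq_one_of_isPrimePow_orderOf hp hinj
    (fun i ↦ pow_eq_one_of_mem_rotations (hx i trivial)) hpow
  obtain ⟨k, hk⟩ := mem_rotations_iff.1 (hx i trivial)
  calc Nat.card {h // IsConj x h} ≤ Nat.card {g // IsConj (x i) g} :=
        Pi.card_isConj_le_of_forall_ne_eq_one hi
    _ ≤ 2 := hk ▸ card_isConj_r_le_two k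

end DihedralProduct

theorem exists_group_small_commutator_classes_large_fitting_index_general (s : ℕ) :
    ∃ (G : Type) (_ : Group G) (_ : Finite G),
      (∀ x : G, (∃ a b : G, x = a⁻¹ * b⁻¹ * a * b) → IsPrimePow (orderOf x) →
        Nat.card {h : G // IsConj x h} ≤ 2) ∧
      ∃ F : Subgroup G,
        IsGreatest {H : Subgroup G | H.Normal ∧ Group.IsNilpotent H} F ∧
        F.index = 2 ^ s := by
  set p : Fin s → ℕ := fun i ↦ Nat.nth Nat.Prime (i + 1)
  have hp : ∀ i, (p i).Prime := fun i ↦ Nat.prime_nth_prime _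
  have hnth : Injective (Nat.nth Nat.Prime) :=
    (Nat.nth_strictMono Nat.infinite_setOfPred_prime).injective
  have hinj : Injective p := fun i j h ↦ Fin.ext (Nat.succ_injective (hnth h))
  have hodd : ∀ i, Odd (p i) := fun i ↦ (hp i).odd_of_ne_two <| by
    rw [← Nat.nth_prime_zero_eq_two]
    exact hnth.ne (Nat.succ_ne_zero _)
  have : ∀ i, NeZero (p i) := fun i ↦ ⟨(hp i).ne_zero⟩
  refine ⟨∀ i, DihedralGroup (p i), inferInstance, inferInstance, ?_, _,
    isGreatest_pi_rotations hodd fun i ↦ (hp i).ne_one, by simp [index_pi_rotations]⟩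
  rintro x ⟨a, b, rfl⟩ hpow
  exact card_isConj_le_two_of_isPrimePow_orderOf hp hinj
    (fun i _ ↦ inv_mul_inv_mul_mul_mem_rotations (a i) (b i)) hpow

/-- For every `s ≥ 1` there is a finite group `G` in which every commutator of prime
power order has conjugacy class of size at most `2`, while the Fitting subgroup (the
largest nilpotent normal subgroup) has index `2^s`. -/
theorem exists_group_small_commutator_classes_large_fitting_index (s : ℕ) (hs : 0 < s) :
    ∃ (G : Type) (_ : Group G) (_ : Finite G),
      (∀ x : G, (∃ a b : G, x = a⁻¹ * b⁻¹ * a * b) → IsPrimePow (orderOf x) →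
        Nat.card {h : G // IsConj x h} ≤ 2) ∧
      ∃ F : Subgroup G,
        IsGreatest {H : Subgroup G | H.Normal ∧ Group.IsNilpotent H} F ∧
        F.index = 2 ^ s :=
  exists_group_small_commutator_classes_large_fitting_index_general s
end

section
/- Let G be a finite group and P a Sylow p-subgroup of G. Then P ∩ G' is generated by the set of commutators [x,y] with x ∈ P, y ∈ G, and [x,y] ∈ P. -/
open scoped commutatorElement

/-- Mathlib's commutator is `⁅x, y⁆ = x * y * x⁻¹ * y⁻¹`, so `x⁻¹ * y⁻¹ * x * y = ⁅x⁻¹, y⁻¹⁆`. -/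
theorem Subgroup.focalSubgroup_eq_closure_inv_mul_inv_mul {G : Type*} [Group G]
    (H : Subgroup G) :
    H.focalSubgroup = closure {z : G | ∃ x y : G, z = x⁻¹ * y⁻¹ * x * y ∧ x ∈ H ∧ z ∈ H} := by
  rw [focalSubgroup_def]
  congr 1
  ext z
  constructor
  · rintro ⟨hz, x, hx, u, rfl⟩
    exact ⟨x⁻¹, u⁻¹, by simp [commutatorElement_def], inv_mem hx, hz⟩
  · rintro ⟨x, y, rfl, hx, hz⟩
    exact ⟨hz, x⁻¹, inv_mem hx, y⁻¹, by simp [commutatorElement_def, mul_assoc]⟩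

/-- Focal subgroup theorem: for a Sylow `p`-subgroup `P` of a finite group `G`,
`P ∩ G'` is generated by the commutators `[x,y]` with `x ∈ P`, `y ∈ G`, `[x,y] ∈ P`. -/
theorem focal_subgroup (G : Type*) [Group G] [Finite G] (p : ℕ) [Fact p.Prime]
    (P : Sylow p G) :
    (P : Subgroup G) ⊓ commutator G =
      Subgroup.closure {z : G | ∃ x y : G, z = x⁻¹ * y⁻¹ * x * y ∧
        x ∈ (P : Subgroup G) ∧ z ∈ (P : Subgroup G)} := by
  rw [inf_comm, Subgroup.commutator_inf_eq_focalSubgroup,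
    Subgroup.focalSubgroup_eq_closure_inv_mul_inv_mul]
end
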